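/- Let F be Thompson's group with generators x₀, x₁, and let H, L be integers with H ≥ 2, L ≠ 0, and H + L ≤ 0 (so that x₁x₀ᴴx₁ᴸ contains a forbidden subword). Then the identity x₁ x₀ᴴ x₁ᴸ = x₀ᴴ x₁^{-H+1} x₀⁻¹ x₁ x₀ x₁^{H+L-1} holds in F, and the right-hand side is the Guba–Sapir normal form of this element. -/

import Mathlib

open scoped BigOperators
open scoped commutatorElement

/-- The two relators of the finite presentation of Thompson's group `F`:
`[x₀x₁⁻¹, x₀⁻¹x₁x₀]` and `[x₀x₁⁻¹, x₀⁻²x₁x₀²]`. -/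
def thompsonRels : Set (FreeGroup (Fin 2)) :=
  { ⁅FreeGroup.of (0 : Fin 2) * (FreeGroup.of (1 : Fin 2))⁻¹,
      (FreeGroup.of (0 : Fin 2))⁻¹ * FreeGroup.of (1 : Fin 2) * FreeGroup.of (0 : Fin 2)⁆,
    ⁅FreeGroup.of (0 : Fin 2) * (FreeGroup.of (1 : Fin 2))⁻¹,
      (FreeGroup.of (0 : Fin 2))⁻¹ ^ 2 * FreeGroup.of (1 : Fin 2) * FreeGroup.of (0 : Fin 2) ^ 2⁆ }

/-- Thompson's group `F`, as a presented group. -/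
abbrev ThompsonF : Type := PresentedGroup thompsonRels

/-- The generator `x₀`. -/
def x₀ : ThompsonF := PresentedGroup.of 0

/-- The generator `x₁`. -/
def x₁ : ThompsonF := PresentedGroup.of 1

/-- The canonical projection from the free group on `x₀, x₁` to Thompson's group. -/
def toF : List (Fin 2 × Bool) → ThompsonF := fun l =>
  PresentedGroup.mk thompsonRels (FreeGroup.mk l)

/-- The word representing `x_g^z` (`g = 0` or `1`), as a list of letters. -/
def powWord (g : Fin 2) (z : ℤ) : List (Fin 2 × Bool) :=
  List.replicate z.natAbs (g, decide (0 < z))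

/-- A word is reduced if it equals the reduced word of the free-group element
it represents. -/
def Reduced (l : List (Fin 2 × Bool)) : Prop :=
  (FreeGroup.mk l).toWord = l

/-- The forbidden subwords of Guba–Sapir: `x₁^{±1} x₀^i x₁` (`i > 0`) and
`x₁^{±1} x₀^{i+1} x₁⁻¹` (`i > 0`). -/
def ForbiddenWord (w : List (Fin 2 × Bool)) : Prop :=
  ∃ (s : Bool) (i : ℕ), 0 < i ∧
    (w = (1, s) :: (List.replicate i ((0 : Fin 2), true) ++ [((1 : Fin 2), true)]) ∨
     w = (1, s) :: (List.replicate (i + 1) ((0 : Fin 2), true) ++ [((1 : Fin 2), false)]))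

/-- A word is a (Guba–Sapir) normal form if it is reduced and contains no
forbidden subword. -/
def IsNormalForm (l : List (Fin 2 × Bool)) : Prop :=
  Reduced l ∧ ∀ w, w <:+: l → ¬ ForbiddenWord w

/-- `w` is the element of `F` whose normal form begins with the prefix `pre`. -/
def NFBeginsWith (w : ThompsonF) (pre : List (Fin 2 × Bool)) : Prop :=
  ∃ l, IsNormalForm l ∧ toF l = w ∧ pre <+: l

/-- `F₁ = {x₀^k : k ≥ 0}`. -/
def SetF₁ : Set ThompsonF := {w | ∃ k : ℕ, w = x₀ ^ k}

/-- `F₂`: normal form begins with `x₀^k x₁^l`, `k > 0`, `l ≠ 0`. -/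
def SetF₂ : Set ThompsonF :=
  {w | ∃ (k l : ℤ), 0 < k ∧ l ≠ 0 ∧ NFBeginsWith w (powWord 0 k ++ powWord 1 l)}

/-- `F₃`: normal form begins with `x₀^{-k} x₁^l`, `k > 0`, `l ∈ ℤ`. -/
def SetF₃ : Set ThompsonF :=
  {w | ∃ (k l : ℤ), 0 < k ∧ NFBeginsWith w (powWord 0 (-k) ++ powWord 1 l)}

/-- `F₄`: normal form begins with `x₁^k`, `k > 0`. -/
def SetF₄ : Set ThompsonF :=
  {w | ∃ k : ℤ, 0 < k ∧ NFBeginsWith w (powWord 1 k)}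

/-- `F₅`: normal form begins with `x₁^{-k}`, `k > 0`. -/
def SetF₅ : Set ThompsonF :=
  {w | ∃ k : ℤ, 0 < k ∧ NFBeginsWith w (powWord 1 (-k))}

/-!
Write `xₙ₊₁ = x₀⁻ⁿ x₁ x₀ⁿ`. The two defining relations say that `x₀x₁⁻¹` commutes with `x₂`
and `x₃`, i.e. `x₁⁻¹ x₂ x₁ = x₃` and `x₁⁻¹ x₃ x₁ = x₄`; shifting by powers of `x₀` and
inducting gives `x₁⁻¹ xₙ x₁ = xₙ₊₁` for all `n ≥ 2`. Hence
`x₀⁻ᴴ x₁ x₀ᴴ = x_{H+1} = x₁^{-(H-1)} x₂ x₁^{H-1}`, which is the identity after multiplying by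
`x₀ᴴ` on the left and `x₁ᴸ` on the right. The right-hand word is freely reduced because
`H ≥ 2`, and it has no forbidden subword because its only letter `x₀` preceded by a letter
`x₁^{±1}` is followed by `x₁⁻¹`, the exponent `H + L - 1` being negative.
-/

namespace ThompsonF

/-- `gen n` is the generator `xₙ` of the infinite presentation of `F`. -/
def gen : ℕ → ThompsonF
  | 0 => x₀
  | n + 1 => (x₀ ^ n)⁻¹ * x₁ * x₀ ^ n

lemma gen_one : gen 1 = x₁ := by simp [gen]

lemma conj_x₀_pow_gen (t : ℕ) {k : ℕ} (hk : 1 ≤ k) :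
    (x₀ ^ t)⁻¹ * gen k * x₀ ^ t = gen (k + t) := by
  obtain ⟨k, rfl⟩ := Nat.exists_eq_add_of_le' hk
  simp only [gen, Nat.add_right_comm k 1 t, pow_add]
  group

lemma conj_gen_shift {i n : ℕ} (hi : 1 ≤ i) (hn : 1 ≤ n)
    (h : (gen i)⁻¹ * gen n * gen i = gen (n + 1)) (t : ℕ) :
    (gen (i + t))⁻¹ * gen (n + t) * gen (i + t) = gen (n + t + 1) := by
  rw [← conj_x₀_pow_gen t hi, ← conj_x₀_pow_gen t hn, Nat.add_right_comm,
    ← conj_x₀_pow_gen t (by omega : 1 ≤ n + 1), ← h]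
  group

lemma commute_of_mem_thompsonRels {a b : FreeGroup (Fin 2)} (h : ⁅a, b⁆ ∈ thompsonRels) :
    Commute (PresentedGroup.mk thompsonRels a) (PresentedGroup.mk thompsonRels b) := by
  rw [← commutatorElement_eq_one_iff_commute, ← map_commutatorElement]
  exact PresentedGroup.one_of_mem h

lemma commute_x₀_mul_x₁_inv_gen_two : Commute (x₀ * x₁⁻¹) (gen 2) := by
  have h := commute_of_mem_thompsonRels (Set.mem_insert _ _)
  simp only [map_mul, map_inv] at h
  simp only [gen, pow_one]
  exact h

lemma commute_x₀_mul_x₁_inv_gen_three : Commute (x₀ * x₁⁻¹) (gen 3) := by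
  have h := commute_of_mem_thompsonRels (Set.mem_insert_of_mem _ rfl)
  simp only [map_mul, map_inv, map_pow, inv_pow] at h
  exact h

lemma conj_x₁_eq_conj_x₀_of_commute {g : ThompsonF} (h : Commute (x₀ * x₁⁻¹) g) :
    x₁⁻¹ * g * x₁ = x₀⁻¹ * g * x₀ :=
  calc x₁⁻¹ * g * x₁ = x₀⁻¹ * ((x₀ * x₁⁻¹) * g * (x₀ * x₁⁻¹)⁻¹) * x₀ := by group
    _ = x₀⁻¹ * g * x₀ := by rw [h.eq]; group

lemma conj_gen_one_gen_two : (gen 1)⁻¹ * gen 2 * gen 1 = gen 3 := by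
  rw [gen_one, conj_x₁_eq_conj_x₀_of_commute commute_x₀_mul_x₁_inv_gen_two,
    ← pow_one x₀, conj_x₀_pow_gen 1 (by norm_num)]

lemma conj_gen_one_gen_three : (gen 1)⁻¹ * gen 3 * gen 1 = gen 4 := by
  rw [gen_one, conj_x₁_eq_conj_x₀_of_commute commute_x₀_mul_x₁_inv_gen_three,
    ← pow_one x₀, conj_x₀_pow_gen 1 (by norm_num)]

lemma conj_gen_one : ∀ n, (gen 1)⁻¹ * gen (n + 2) * gen 1 = gen (n + 3)
  | 0 => conj_gen_one_gen_two
  | 1 => conj_gen_one_gen_three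
  | n + 2 => by
    have h₀ := conj_gen_one n
    have h₁ : (gen 1)⁻¹ * gen (n + 3) * gen 1 = gen (n + 4) := conj_gen_one (n + 1)
    have h₂ : (gen 2)⁻¹ * gen (n + 3) * gen 2 = gen (n + 4) :=
      conj_gen_shift le_rfl (by omega) h₀ 1
    have h₃ : (gen 3)⁻¹ * gen (n + 4) * gen 3 = gen (n + 5) :=
      conj_gen_shift le_rfl (by omega) h₀ 2
    -- `x₂x₁ = x₁x₃` trades conjugation by `x₁` for conjugations by `x₂` and `x₃`, where the
    -- shifted earlier cases apply.
    have h₄ : gen 2 * gen 1 = gen 1 * gen 3 := by rw [← conj_gen_one_gen_two]; group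
    calc (gen 1)⁻¹ * gen (n + 4) * gen 1
        = (gen 2 * gen 1)⁻¹ * gen (n + 3) * (gen 2 * gen 1) := by rw [← h₂]; group
      _ = (gen 3)⁻¹ * ((gen 1)⁻¹ * gen (n + 3) * gen 1) * gen 3 := by rw [h₄]; group
      _ = gen (n + 5) := by rw [h₁, h₃]

lemma gen_add_two (n : ℕ) : gen (n + 2) = (x₁ ^ n)⁻¹ * gen 2 * x₁ ^ n := by
  induction n with
  | zero => simp
  | succ n ih =>
    rw [show n + 1 + 2 = n + 3 from rfl, ← conj_gen_one, ih, gen_one, pow_succ]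
    group

theorem x₁_mul_x₀_zpow_mul_x₁_zpow (H L : ℤ) (hH : 1 ≤ H) :
    x₁ * x₀ ^ H * x₁ ^ L = x₀ ^ H * x₁ ^ (-H + 1) * x₀⁻¹ * x₁ * x₀ * x₁ ^ (H + L - 1) := by
  obtain ⟨n, rfl⟩ : ∃ n : ℕ, H = n + 1 := ⟨(H - 1).toNat, by omega⟩
  have h := gen_add_two n
  simp only [gen, pow_one] at h
  calc x₁ * x₀ ^ ((n : ℤ) + 1) * x₁ ^ L
      = x₀ ^ (n + 1) * ((x₀ ^ (n + 1))⁻¹ * x₁ * x₀ ^ (n + 1)) * x₁ ^ L := by group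
    _ = x₀ ^ (n + 1) * ((x₁ ^ n)⁻¹ * (x₀⁻¹ * x₁ * x₀) * x₁ ^ n) * x₁ ^ L := by rw [h]
    _ = _ := by group

end ThompsonF

section Words

open List

lemma toF_append (l₁ l₂ : List (Fin 2 × Bool)) : toF (l₁ ++ l₂) = toF l₁ * toF l₂ := by
  rw [toF, toF, toF, ← FreeGroup.mul_mk, map_mul]

lemma powWord_natCast (g : Fin 2) (n : ℕ) : powWord g n = replicate n (g, true) := by
  simp only [powWord, Int.natAbs_natCast]
  cases n <;> simp

lemma powWord_neg_natCast (g : Fin 2) (n : ℕ) : powWord g (-n) = replicate n (g, false) := by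
  simp [powWord]

lemma FreeGroup.mk_powWord (g : Fin 2) (z : ℤ) :
    FreeGroup.mk (powWord g z) = FreeGroup.of g ^ z := by
  obtain ⟨n, rfl | rfl⟩ := Int.eq_nat_or_neg z
  · rw [powWord_natCast, zpow_natCast, FreeGroup.of, FreeGroup.pow_mk, flatten_replicate_singleton]
  · rw [powWord_neg_natCast, zpow_neg, zpow_natCast, FreeGroup.of, FreeGroup.pow_mk,
      flatten_replicate_singleton, FreeGroup.inv_mk]
    simp [FreeGroup.invRev]

lemma toF_powWord (g : Fin 2) (z : ℤ) : toF (powWord g z) = PresentedGroup.of g ^ z := by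
  rw [toF, FreeGroup.mk_powWord, map_zpow]
  rfl

lemma reduced_of_isReduced {l : List (Fin 2 × Bool)} (h : FreeGroup.IsReduced l) : Reduced l := by
  rw [Reduced, FreeGroup.toWord_mk]
  exact h.reduce_eq

lemma ForbiddenWord.exists_eq_cons {w : List (Fin 2 × Bool)} (hw : ForbiddenWord w) :
    ∃ b z u, w = (1, b) :: (0, true) :: z :: u ∧ z ≠ (1, false) := by
  obtain ⟨b, i, hi, rfl | rfl⟩ := hw <;> obtain ⟨i, rfl⟩ := Nat.exists_eq_add_of_le' hi
  · cases i <;> simp [replicate_succ]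
  · simp [replicate_succ]

lemma forall_infix_not_forbiddenWord {l : List (Fin 2 × Bool)}
    (h : ∀ k x, l[k]? = some x → x.1 = 1 → l[k + 1]? = some (0, true) →
      l[k + 2]? = some (1, false)) :
    ∀ w, w <:+: l → ¬ ForbiddenWord w := by
  rintro w ⟨s, t, rfl⟩ hw
  obtain ⟨b, z, u, rfl, hz⟩ := ForbiddenWord.exists_eq_cons hw
  have h' := h s.length (1, b) (by simp) rfl (by simp)
  exact hz (by simpa using h')

lemma List.getElem?_replicate_append {α : Type*} (k j : ℕ) (a : α) (l : List α) :
    (replicate k a ++ l)[j]? = if j < k then some a else l[j - k]? := by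
  split_ifs with h
  · rw [getElem?_append_left (by simpa using h), getElem?_replicate_of_lt h]
  · rw [getElem?_append_right (by simpa using h), length_replicate]

/-- The normal form of the theorem for `H = n + 2` and `H + L - 1 = -(m + 1)`. -/
def nfWord (n m : ℕ) : List (Fin 2 × Bool) :=
  replicate (n + 2) (0, true) ++ (replicate (n + 1) (1, false) ++
    (0, false) :: (1, true) :: (0, true) :: replicate (m + 1) (1, false))

lemma isReduced_nfWord (n m : ℕ) : FreeGroup.IsReduced (nfWord n m) := by
  simp [nfWord, FreeGroup.IsReduced, isChain_append, isChain_replicate_of_rel, getLast?_replicate,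
    head?_replicate, isChain_cons]

lemma lt_or_eq_of_getElem?_nfWord_eq_x₀ {n m j : ℕ} (h : (nfWord n m)[j]? = some (0, true)) :
    j < n + 2 ∨ j = 2 * n + 5 := by
  simp only [nfWord, getElem?_replicate_append] at h
  split_ifs at h
  · omega
  · simp at h
  · rcases hj : j - (n + 2) - (n + 1) with _ | _ | _ | i
    · simp [hj] at h
    · simp [hj] at h
    · omega
    · simp [hj, getElem?_replicate] at h

lemma isNormalForm_nfWord (n m : ℕ) : IsNormalForm (nfWord n m) := by
  refine ⟨reduced_of_isReduced (isReduced_nfWord n m), forall_infix_not_forbiddenWord ?_⟩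
  intro k x hk hx hk₁
  rcases lt_or_eq_of_getElem?_nfWord_eq_x₀ hk₁ with hlt | hk₂
  · simp only [nfWord, getElem?_replicate_append, if_pos (by omega : k < n + 2)] at hk
    simp [← Option.some_inj.mp hk] at hx
  · simp only [nfWord, getElem?_replicate_append]
    rw [if_neg (by omega), if_neg (by omega), show k + 2 - (n + 2) - (n + 1) = 3 by omega]
    rfl

theorem isNormalForm_powWord (H K : ℤ) (hH : 2 ≤ H) (hK : K < 0) :
    IsNormalForm (powWord 0 H ++ powWord 1 (-H + 1) ++ powWord 0 (-1) ++ powWord 1 1 ++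
      powWord 0 1 ++ powWord 1 K) := by
  obtain ⟨n, rfl⟩ : ∃ n : ℕ, H = (n + 2 : ℕ) := ⟨(H - 2).toNat, by omega⟩
  obtain ⟨m, rfl⟩ : ∃ m : ℕ, K = -(m + 1 : ℕ) := ⟨(-K - 1).toNat, by omega⟩
  rw [show -((n + 2 : ℕ) : ℤ) + 1 = -(n + 1 : ℕ) by push_cast; ring, powWord_natCast,
    powWord_neg_natCast, powWord_neg_natCast]
  convert isNormalForm_nfWord n m using 1
  simp only [nfWord, append_assoc]
  rfl

end Words

theorem statement11_general (H L : ℤ) (hH : 2 ≤ H) (hHL : H + L ≤ 0) :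
    x₁ * x₀ ^ H * x₁ ^ L =
      x₀ ^ H * x₁ ^ (-H + 1) * x₀⁻¹ * x₁ * x₀ * x₁ ^ (H + L - 1) ∧
    IsNormalForm
      (powWord 0 H ++ powWord 1 (-H + 1) ++ powWord 0 (-1) ++ powWord 1 1 ++
        powWord 0 1 ++ powWord 1 (H + L - 1)) ∧
    toF (powWord 0 H ++ powWord 1 (-H + 1) ++ powWord 0 (-1) ++ powWord 1 1 ++
        powWord 0 1 ++ powWord 1 (H + L - 1)) =
      x₁ * x₀ ^ H * x₁ ^ L := by
  have hid := ThompsonF.x₁_mul_x₀_zpow_mul_x₁_zpow H L (by omega)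
  refine ⟨hid, isNormalForm_powWord H (H + L - 1) hH (by omega), ?_⟩
  rw [hid]
  simp only [toF_append, toF_powWord, zpow_one, zpow_neg_one]
  rfl

/-- formula (8). If `H ≥ 2`, `L ≠ 0`, `H + L ≤ 0`, then
`x₁x₀ᴴx₁ᴸ = x₀ᴴx₁^{-H+1}x₀⁻¹x₁x₀x₁^{H+L-1}` in `F`, and the right-hand side is
the Guba–Sapir normal form of this element. -/
theorem statement11 (H L : ℤ) (hH : 2 ≤ H) (hL : L ≠ 0) (hHL : H + L ≤ 0) :
    x₁ * x₀ ^ H * x₁ ^ L =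
      x₀ ^ H * x₁ ^ (-H + 1) * x₀⁻¹ * x₁ * x₀ * x₁ ^ (H + L - 1) ∧
    IsNormalForm
      (powWord 0 H ++ powWord 1 (-H + 1) ++ powWord 0 (-1) ++ powWord 1 1 ++
        powWord 0 1 ++ powWord 1 (H + L - 1)) ∧
    toF (powWord 0 H ++ powWord 1 (-H + 1) ++ powWord 0 (-1) ++ powWord 1 1 ++
        powWord 0 1 ++ powWord 1 (H + L - 1)) =
      x₁ * x₀ ^ H * x₁ ^ L :=
  statement11_general H L hH hHL
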